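/- For τ_PF ∈ (0,1) and y > 0, the map D ↦ (1/D)·ln(1 + (1 − τ_PF)·(e^{yD} − 1)) is strictly increasing in D on (0, ∞). -/

import Mathlib

/-! With `c = 1 - τPF`, the yield is `y · g(yD) / (yD)` for `g x = log (1 + c (eˣ - 1))`.
Since `g` is strictly convex (its derivative `1 - (1 - c) / (1 + c (eˣ - 1))` is strictly
increasing) and `g 0 = 0`, the slope `g x / x` of its chords from the origin strictly increases. -/

open Set Real

theorem StrictConvexOn.strictMonoOn_div_self {𝕜 : Type*} [Field 𝕜] [LinearOrder 𝕜]
    [IsStrictOrderedRing 𝕜] {f : 𝕜 → 𝕜} (hf : StrictConvexOn 𝕜 (Ici 0) f) (h0 : f 0 = 0) :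
    StrictMonoOn (fun x => f x / x) (Ioi 0) := by
  intro x hx y hy hxy
  simpa [h0] using hf.secant_strict_mono self_mem_Ici (mem_Ici_of_Ioi hx) (mem_Ici_of_Ioi hy)
    (ne_of_gt hx) (ne_of_gt hy) hxy

theorem strictConvexOn_log_one_add_mul_exp_sub_one {c : ℝ} (hc0 : 0 < c) (hc1 : c < 1) :
    StrictConvexOn ℝ univ (fun x => log (1 + c * (exp x - 1))) := by
  have hpos : ∀ x, 0 < 1 + c * (exp x - 1) := fun x => by nlinarith [exp_pos x]
  have hderiv : deriv (fun x => log (1 + c * (exp x - 1)))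
      = fun x => 1 - (1 - c) / (1 + c * (exp x - 1)) := by
    funext x
    have h := (((hasDerivAt_exp x).sub_const 1).const_mul c).const_add 1 |>.log (hpos x).ne'
    rw [h.deriv]
    field_simp [(hpos x).ne']
    ring
  refine StrictMono.strictConvexOn_univ_of_deriv ?_ ?_
  · exact Continuous.log (by fun_prop) fun x => (hpos x).ne'
  · intro x x' hxx'
    rw [hderiv]
    have hdenom : 1 + c * (exp x - 1) < 1 + c * (exp x' - 1) := by gcongr
    have := div_lt_div_of_pos_left (by linarith : 0 < 1 - c) (hpos x) hdenom
    linarith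

/-- The exact finite-horizon after-tax yield is strictly increasing
in the holding period D on (0, ∞). -/
theorem after_tax_yield_strictMono (τPF y : ℝ) (hτ : τPF ∈ Set.Ioo (0:ℝ) 1)
    (hy : 0 < y) :
    StrictMonoOn
      (fun D : ℝ => (1 / D) * Real.log (1 + (1 - τPF) * (Real.exp (y * D) - 1)))
      (Set.Ioi (0:ℝ)) := by
  obtain ⟨hτ0, hτ1⟩ := hτ
  have hslope := ((strictConvexOn_log_one_add_mul_exp_sub_one (c := 1 - τPF) (by linarith)
    (by linarith)).subset (subset_univ _) (convex_Ici 0)).strictMonoOn_div_self (by simp)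
  intro a (ha : 0 < a) b (hb : 0 < b) hab
  calc 1 / a * log (1 + (1 - τPF) * (exp (y * a) - 1))
      = y * (log (1 + (1 - τPF) * (exp (y * a) - 1)) / (y * a)) := by field_simp
    _ < y * (log (1 + (1 - τPF) * (exp (y * b) - 1)) / (y * b)) :=
      mul_lt_mul_of_pos_left (hslope (mul_pos hy ha) (mul_pos hy hb) (by gcongr)) hy
    _ = 1 / b * log (1 + (1 - τPF) * (exp (y * b) - 1)) := by field_simp
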